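/- Let R be an irreducible reduced crystallographic root system with positive roots R⁺ and dominant weights P⁺. If ω is a small dominant weight (i.e., ⟨ω, α∨⟩ ≤ 2 for all α ∈ R⁺), then every dominant weight μ with μ ≤ ω in the dominance order is also small. -/

import Mathlib

/-!
For dominant `μ`, the largest value of `⟪μ, α∨⟫` over positive roots `α` is attained at a
dominant root `β`: among the maximisers take one of greatest height `⟪ρ, β∨⟫`, `ρ = ∑ R⁺`;
if `⟪β, δ⟫ < 0` for a positive root `δ`, then `s_δ β` is again a positive root and
`⟪μ, (s_δ β)∨⟫ ≥ ⟪μ, β∨⟫`, `⟪ρ, (s_δ β)∨⟫ > ⟪ρ, β∨⟫`. Pairing with the dominant `β∨` is monotone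
in the dominance order, so `⟪μ, α∨⟫ ≤ ⟪μ, β∨⟫ ≤ ⟪ω, β∨⟫ ≤ 2`.
-/

open RealInnerProductSpace

noncomputable section

variable {E : Type*} [NormedAddCommGroup E] [InnerProductSpace ℝ E] [FiniteDimensional ℝ E]

/-- The coroot `α∨ = 2α/⟨α,α⟩` of a vector `α`. -/
def coroot (α : E) : E := (2 / ⟪α, α⟫) • α

/-- The orthogonal reflection across the hyperplane perpendicular to `α`. -/
def reflAt (α : E) : E ≃ₗᵢ[ℝ] E := Submodule.reflection (ℝ ∙ α)ᗮ

/-- An irreducible reduced crystallographic root system with a choice of positive roots. -/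
structure IsRootSystem (R Rpos : Finset E) : Prop where
  pos_subset : Rpos ⊆ R
  ne_zero : ∀ α ∈ R, α ≠ 0
  span_top : Submodule.span ℝ (R : Set E) = ⊤
  reduced : ∀ α ∈ R, ∀ c : ℝ, c • α ∈ (R : Set E) → c = 1 ∨ c = -1
  refl_mem : ∀ α ∈ R, ∀ β ∈ R, reflAt α β ∈ R
  cryst : ∀ α ∈ R, ∀ β ∈ R, ∃ k : ℤ, ⟪β, coroot α⟫ = (k : ℝ)
  pos_split : ∀ α ∈ R, Xor' (α ∈ Rpos) (-α ∈ Rpos)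
  pos_closed : ∀ α ∈ Rpos, ∀ β ∈ Rpos, α + β ∈ R → α + β ∈ Rpos
  irreducible : ∀ S : Finset E, S ⊆ R → S.Nonempty → S ≠ R →
    ∃ α ∈ S, ∃ β ∈ R, β ∉ S ∧ ⟪α, β⟫ ≠ 0

/-- The Weyl group: the subgroup of linear isometries generated by the root reflections. -/
def weylGroup (R : Finset E) : Subgroup (E ≃ₗᵢ[ℝ] E) :=
  Subgroup.closure (reflAt '' (R : Set E))

/-- A weight: an element with integral pairings against all coroots. -/
def IsWeight (R : Finset E) (x : E) : Prop := ∀ α ∈ R, ∃ k : ℤ, ⟪x, coroot α⟫ = (k : ℝ)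

/-- Dominant: nonnegative pairing with all positive roots. -/
def IsDominant (Rpos : Finset E) (x : E) : Prop := ∀ α ∈ Rpos, 0 ≤ ⟪x, α⟫

/-- Dominance order: `μ ≤ λ` iff `λ - μ` is a nonnegative integer combination of positive
roots, i.e. lies in the additive submonoid generated by the positive roots. -/
def domLE (Rpos : Finset E) (μ lam : E) : Prop :=
  lam - μ ∈ AddSubmonoid.closure (Rpos : Set E)

/-- Strict dominance order. -/
def domLT (Rpos : Finset E) (μ lam : E) : Prop := domLE Rpos μ lam ∧ μ ≠ lam

/-- A small weight: a dominant weight pairing at most `2` with every positive coroot. -/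
def IsSmall (R Rpos : Finset E) (ω : E) : Prop :=
  IsDominant Rpos ω ∧ IsWeight R ω ∧ ∀ α ∈ Rpos, ⟪ω, coroot α⟫ ≤ 2

/-- A minuscule weight: a nonzero dominant weight pairing at most `1` with every positive
coroot. -/
def IsMinuscule (R Rpos : Finset E) (ω : E) : Prop :=
  IsDominant Rpos ω ∧ IsWeight R ω ∧ ω ≠ 0 ∧ ∀ α ∈ Rpos, ⟪ω, coroot α⟫ ≤ 1

/-- The Weyl orbit of a point. -/
def weylOrbit (R : Finset E) (x : E) : Set E := {y | ∃ w ∈ weylGroup R, w x = y}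

section

omit [FiniteDimensional ℝ E]

lemma inner_coroot (x α : E) : ⟪x, coroot α⟫ = 2 / ⟪α, α⟫ * ⟪x, α⟫ := by
  simp [coroot, real_inner_smul_right]

lemma two_div_inner_self_pos {α : E} (hα : α ≠ 0) : 0 < 2 / ⟪α, α⟫ :=
  div_pos two_pos (real_inner_self_pos.2 hα)

lemma inner_coroot_neg_iff {α : E} (hα : α ≠ 0) (x : E) :
    ⟪x, coroot α⟫ < 0 ↔ ⟪x, α⟫ < 0 := by
  rw [inner_coroot, ← not_le, ← not_le, mul_nonneg_iff_of_pos_left (two_div_inner_self_pos hα)]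

lemma inner_coroot_self {α : E} (hα : α ≠ 0) : ⟪α, coroot α⟫ = 2 := by
  have : ⟪α, α⟫ ≠ 0 := inner_self_ne_zero.2 hα
  rw [inner_coroot]
  field_simp

lemma reflAt_apply (α x : E) : reflAt α x = x - ⟪x, coroot α⟫ • α := by
  rcases eq_or_ne α 0 with rfl | hα
  · simp [reflAt, coroot, Submodule.reflection_mem_subspace_eq_self]
  rw [reflAt, Submodule.reflection_apply, Submodule.starProjection_orthogonal_val,
    Submodule.starProjection_singleton, inner_coroot, real_inner_self_eq_norm_sq,
    real_inner_comm, RCLike.ofReal_real_eq_id, id_eq]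
  match_scalars <;> ring

lemma reflAt_self (α : E) : reflAt α α = -α := by
  rcases eq_or_ne α 0 with rfl | hα
  · simp
  rw [reflAt_apply, inner_coroot_self hα]
  module

lemma reflAt_reflAt (δ x : E) : reflAt δ (reflAt δ x) = x :=
  Submodule.reflection_reflection _ x

lemma inner_reflAt_left_self (δ x : E) : ⟪reflAt δ x, δ⟫ = -⟪x, δ⟫ :=
  calc ⟪reflAt δ x, δ⟫ = -⟪reflAt δ x, reflAt δ δ⟫ := by
        rw [reflAt_self, inner_neg_right, neg_neg]
    _ = -⟪x, δ⟫ := by rw [LinearIsometryEquiv.inner_map_map]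

lemma coroot_reflAt (δ x : E) : coroot (reflAt δ x) = reflAt δ (coroot x) := by
  rw [coroot, coroot, (reflAt δ).inner_map_map, map_smul]

lemma inner_coroot_reflAt (δ β y : E) :
    ⟪y, coroot (reflAt δ β)⟫ = ⟪y, coroot β⟫ - ⟪coroot β, coroot δ⟫ * ⟪y, δ⟫ := by
  rw [coroot_reflAt, reflAt_apply, inner_sub_right, real_inner_smul_right]

lemma inner_coroot_coroot_neg {β δ : E} (hβ : β ≠ 0) (hδ : δ ≠ 0) (h : ⟪β, δ⟫ < 0) :
    ⟪coroot β, coroot δ⟫ < 0 := by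
  rw [inner_coroot_neg_iff hδ, coroot, real_inner_smul_left]
  exact mul_neg_of_pos_of_neg (two_div_inner_self_pos hβ) h

lemma inner_coroot_mul_inner_coroot_lt_four {α β : E} (hα : α ≠ 0) (hβ : β ≠ 0)
    (hαβ : ∀ r : ℝ, β ≠ r • α) : ⟪β, coroot α⟫ * ⟪α, coroot β⟫ < 4 := by
  have hCS : |⟪α, β⟫| < ‖α‖ * ‖β‖ := by
    refine (abs_real_inner_le_norm α β).lt_of_ne fun h => ?_
    obtain ⟨r, -, hr⟩ := (norm_inner_eq_norm_iff (𝕜 := ℝ) hα hβ).1 h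
    exact hαβ r hr
  have hsq : ⟪α, β⟫ ^ 2 < ⟪α, α⟫ * ⟪β, β⟫ := by
    rw [real_inner_self_eq_norm_sq, real_inner_self_eq_norm_sq, ← sq_abs, ← mul_pow]
    exact pow_lt_pow_left₀ hCS (abs_nonneg _) two_ne_zero
  have hpos : 0 < ⟪α, α⟫ * ⟪β, β⟫ :=
    mul_pos (real_inner_self_pos.2 hα) (real_inner_self_pos.2 hβ)
  calc ⟪β, coroot α⟫ * ⟪α, coroot β⟫ = 4 * ⟪α, β⟫ ^ 2 / (⟪α, α⟫ * ⟪β, β⟫) := by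
        rw [inner_coroot, inner_coroot, real_inner_comm β α]; ring
    _ < 4 := by rw [div_lt_iff₀ hpos]; linarith

namespace IsRootSystem

variable {R Rpos : Finset E}

lemma neg_mem_pos_of_notMem (hRS : IsRootSystem R Rpos) {α : E} (hα : α ∈ R)
    (h : α ∉ Rpos) : -α ∈ Rpos :=
  ((hRS.pos_split α hα).resolve_left fun h' => h h'.1).1

lemma neg_notMem_pos (hRS : IsRootSystem R Rpos) {α : E} (hα : α ∈ Rpos) : -α ∉ Rpos :=
  fun h => ((hRS.pos_split α (hRS.pos_subset hα)).resolve_right fun h' => h'.2 hα).2 h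

lemma add_mem_of_inner_neg (hRS : IsRootSystem R Rpos) {α β : E} (hα : α ∈ R) (hβ : β ∈ R)
    (hneg : ⟪β, α⟫ < 0) (hne : β ≠ -α) : β + α ∈ R := by
  have hα0 := hRS.ne_zero α hα
  have hβ0 := hRS.ne_zero β hβ
  obtain ⟨p, hp⟩ := hRS.cryst α hα β hβ
  obtain ⟨q, hq⟩ := hRS.cryst β hβ α hα
  have hp0 : p < 0 := by exact_mod_cast hp ▸ (inner_coroot_neg_iff hα0 β).2 hneg
  have hq0 : q < 0 := by
    exact_mod_cast hq ▸ (inner_coroot_neg_iff hβ0 α).2 (real_inner_comm α β ▸ hneg)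
  have hnot_mul : ∀ r : ℝ, β ≠ r • α := by
    rintro r rfl
    rcases hRS.reduced α hα r hβ with rfl | rfl
    · exact (real_inner_self_pos.2 hα0).not_gt (by simpa using hneg)
    · exact hne (neg_one_smul ℝ α)
  have hpq : p * q < 4 := by
    exact_mod_cast hp ▸ hq ▸ inner_coroot_mul_inner_coroot_lt_four hα0 hβ0 hnot_mul
  obtain rfl | rfl : p = -1 ∨ q = -1 := by
    by_contra! h
    nlinarith [show p ≤ -2 by omega, show q ≤ -2 by omega]
  · simpa [reflAt_apply, hp] using hRS.refl_mem α hα β hβ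
  · simpa [reflAt_apply, hq, add_comm] using hRS.refl_mem β hβ α hα

lemma add_nat_smul_mem_pos (hRS : IsRootSystem R Rpos) {γ δ : E} (hγ : γ ∈ Rpos)
    (hδ : δ ∈ Rpos) {m : ℕ} (hm : ⟪γ, coroot δ⟫ = -m) :
    ∀ j : ℕ, 2 * j ≤ m + 1 → γ + (j : ℝ) • δ ∈ Rpos := by
  have hδ0 := hRS.ne_zero δ (hRS.pos_subset hδ)
  intro j
  induction j with
  | zero => simpa using hγ
  | succ j ih =>
    intro hj
    have hγj := ih (by omega)
    have hneg : ⟪γ + (j : ℝ) • δ, δ⟫ < 0 := by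
      rw [← inner_coroot_neg_iff hδ0, inner_add_left, real_inner_smul_left, hm,
        inner_coroot_self hδ0]
      have : (2 * j + 1 : ℝ) ≤ m := by exact_mod_cast (by omega : 2 * j + 1 ≤ m)
      linarith
    have hne : γ + (j : ℝ) • δ ≠ -δ := fun h => hRS.neg_notMem_pos hδ (h ▸ hγj)
    have hsum := hRS.add_mem_of_inner_neg (hRS.pos_subset hδ) (hRS.pos_subset hγj) hneg hne
    rw [Nat.cast_succ, add_smul, one_smul, ← add_assoc]
    exact hRS.pos_closed _ hγj δ hδ hsum

lemma reflAt_mem_pos (hRS : IsRootSystem R Rpos) {γ δ : E} (hγ : γ ∈ Rpos) (hδ : δ ∈ Rpos)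
    (h : ⟪γ, δ⟫ ≤ 0) : reflAt δ γ ∈ Rpos := by
  have hγR := hRS.pos_subset hγ
  have hδR := hRS.pos_subset hδ
  have hδ0 := hRS.ne_zero δ hδR
  obtain ⟨c, hc⟩ := hRS.cryst δ hδR γ hγR
  have hc0 : c ≤ 0 := by
    have : ⟪γ, coroot δ⟫ ≤ 0 := by
      rw [inner_coroot]
      exact mul_nonpos_of_nonneg_of_nonpos (two_div_inner_self_pos hδ0).le h
    exact_mod_cast hc ▸ this
  obtain ⟨a, b, hab, ha, hb⟩ : ∃ a b : ℕ, a + b = c.natAbs ∧ 2 * a ≤ c.natAbs + 1 ∧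
      2 * b ≤ c.natAbs + 1 := ⟨(c.natAbs + 1) / 2, c.natAbs / 2, by omega, by omega, by omega⟩
  have hm : ⟪γ, coroot δ⟫ = -c.natAbs := by rw [hc]; exact_mod_cast (by omega : c = -c.natAbs)
  have hrefl : reflAt δ γ = γ + (c.natAbs : ℝ) • δ := by
    rw [reflAt_apply, hm, neg_smul, sub_neg_eq_add]
  by_contra hnot
  -- `-s_δ γ` is again a positive root pairing to `-|c|` with `δ∨`; climbing the `δ`-strings
  -- from `γ` by `a` steps and from `-s_δ γ` by `b` steps gives two positive roots of sum zero.
  have hγ' : -reflAt δ γ ∈ Rpos := hRS.neg_mem_pos_of_notMem (hRS.refl_mem δ hδR γ hγR) hnot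
  have hm' : ⟪-reflAt δ γ, coroot δ⟫ = -c.natAbs := by
    rw [hrefl, inner_neg_left, inner_add_left, real_inner_smul_left, hm, inner_coroot_self hδ0]
    ring
  have hup := hRS.add_nat_smul_mem_pos hγ hδ hm a ha
  have hup' := hRS.add_nat_smul_mem_pos hγ' hδ hm' b hb
  rw [hrefl, ← hab] at hup'
  exact hRS.neg_notMem_pos hup (by convert hup' using 1; push_cast; module)

lemma inner_sum_posRoots_pos (hRS : IsRootSystem R Rpos) {δ : E} (hδ : δ ∈ Rpos) :
    0 < ⟪∑ γ ∈ Rpos, γ, δ⟫ := by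
  classical
  set A := Rpos.filter fun γ => reflAt δ γ ∈ Rpos
  have hA : ∑ γ ∈ A, ⟪γ, δ⟫ = 0 := by
    have hsymm : ∑ γ ∈ A, ⟪γ, δ⟫ = ∑ γ ∈ A, -⟪γ, δ⟫ := by
      have hmaps : ∀ γ ∈ A, reflAt δ γ ∈ A := by
        intro γ hγ
        simp only [A, Finset.mem_filter, reflAt_reflAt] at hγ ⊢
        exact hγ.symm
      refine Finset.sum_nbij' (reflAt δ) (reflAt δ) hmaps hmaps
        (fun γ _ => reflAt_reflAt δ γ) (fun γ _ => reflAt_reflAt δ γ) fun γ _ => ?_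
      rw [inner_reflAt_left_self, neg_neg]
    rw [Finset.sum_neg_distrib] at hsymm
    linarith
  have hrest : 0 < ∑ γ ∈ Rpos.filter (fun γ => reflAt δ γ ∉ Rpos), ⟪γ, δ⟫ := by
    refine Finset.sum_pos (fun γ hγ => ?_) ⟨δ, ?_⟩
    · rw [Finset.mem_filter] at hγ
      exact lt_of_not_ge fun h => hγ.2 (hRS.reflAt_mem_pos hγ.1 hδ h)
    · rw [Finset.mem_filter, reflAt_self]
      exact ⟨hδ, hRS.neg_notMem_pos hδ⟩
  rw [sum_inner, ← Finset.sum_filter_add_sum_filter_not Rpos (fun γ => reflAt δ γ ∈ Rpos), hA,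
    zero_add]
  exact hrest

lemma exists_dominant_max_inner_coroot (hRS : IsRootSystem R Rpos) {μ : E}
    (hμ : IsDominant Rpos μ) (hne : Rpos.Nonempty) :
    ∃ β ∈ Rpos, IsDominant Rpos β ∧ ∀ α ∈ Rpos, ⟪μ, coroot α⟫ ≤ ⟪μ, coroot β⟫ := by
  obtain ⟨β, hβ, hmax⟩ := Rpos.exists_max_image
    (fun γ => toLex (⟪μ, coroot γ⟫, ⟪∑ α ∈ Rpos, α, coroot γ⟫)) hne
  refine ⟨β, hβ, fun δ hδ => ?_, fun α hα => (Prod.Lex.toLex_le_toLex'.1 (hmax α hα)).1⟩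
  by_contra! hneg
  have hcc := inner_coroot_coroot_neg (hRS.ne_zero β (hRS.pos_subset hβ))
    (hRS.ne_zero δ (hRS.pos_subset hδ)) hneg
  have hμδ := hμ δ hδ
  have hρδ := hRS.inner_sum_posRoots_pos hδ
  refine (hmax _ (hRS.reflAt_mem_pos hβ hδ hneg.le)).not_gt (Prod.Lex.toLex_lt_toLex.2 ?_)
  simp only [inner_coroot_reflAt]
  rcases hμδ.lt_or_eq with hμδ | hμδ
  · left; nlinarith
  · right; rw [← hμδ]; exact ⟨by ring, by nlinarith⟩

end IsRootSystem

lemma IsDominant.coroot {Rpos : Finset E} {β : E} (hβ : IsDominant Rpos β) :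
    IsDominant Rpos (coroot β) := fun α hα => by
  rw [real_inner_comm, inner_coroot]
  exact mul_nonneg (div_nonneg zero_le_two real_inner_self_nonneg) (real_inner_comm α β ▸ hβ α hα)

lemma IsDominant.inner_le_inner_of_domLE {Rpos : Finset E} {x μ lam : E}
    (hx : IsDominant Rpos x) (hle : domLE Rpos μ lam) : ⟪μ, x⟫ ≤ ⟪lam, x⟫ := by
  have : 0 ≤ ⟪lam - μ, x⟫ := by
    refine AddSubmonoid.closure_induction (motive := fun y _ => 0 ≤ ⟪y, x⟫) (fun α hα => ?_)
      (by simp) (fun _ _ _ _ h₁ h₂ => by rw [inner_add_left]; positivity) hle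
    rw [real_inner_comm]
    exact hx α hα
  rwa [inner_sub_left, sub_nonneg] at this

end

/-- every dominant weight below a small weight in dominance order is small. -/
theorem small_of_le_small (R Rpos : Finset E) (hRS : IsRootSystem R Rpos)
    (ω μ : E) (hω : IsSmall R Rpos ω)
    (hμdom : IsDominant Rpos μ) (hμwt : IsWeight R μ)
    (hle : domLE Rpos μ ω) : IsSmall R Rpos μ := by
  refine ⟨hμdom, hμwt, fun α hα => ?_⟩
  obtain ⟨β, hβ, hβdom, hβmax⟩ := hRS.exists_dominant_max_inner_coroot hμdom ⟨α, hα⟩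
  calc ⟪μ, coroot α⟫ ≤ ⟪μ, coroot β⟫ := hβmax α hα
    _ ≤ ⟪ω, coroot β⟫ := hβdom.coroot.inner_le_inner_of_domLE hle
    _ ≤ 2 := hω.2.2 β hβ
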